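/- Fix p₁, p₂, p₃ ∈ (1,∞) with 1/p₁ + 1/p₂ + 1/p₃ ≤ 1, and define 1/r = 1/p₁ + 1/p₂ + 1/p₃. Then ‖Σ_{i=1}^n e_i ⊗ e_i ⊗ e_i‖_{ℓ_{p₁}^n ⊗̂ ℓ_{p₂}^n ⊗̂ ℓ_{p₃}^n} = n^{1/r}. -/

import Mathlib

/-!
Lower bound: in any representation `Σⱼ xⱼ ⊗ yⱼ ⊗ zⱼ` of the diagonal tensor, the coefficient at
`(i, i, i)` gives `Σⱼ xⱼ i * yⱼ i * zⱼ i = 1`. Summing over `i` and applying, for each `j`, Hölder's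
inequality with exponents `p₁, p₂, p₃` and `(1 - 1/r)⁻¹` yields `n ≤ n ^ (1 - 1/r) * Σⱼ ‖xⱼ‖ ‖yⱼ‖ ‖zⱼ‖`.

Upper bound: by orthogonality of the characters `ε ↦ εᵢ εⱼ` of the sign group `{±1}ⁿ`, the
average of `(ε * δ) ⊗ ε ⊗ δ` over all pairs of sign vectors is the diagonal tensor, and every
term costs `n ^ (1/p₁) * n ^ (1/p₂) * n ^ (1/p₃) = n ^ (1/r)`.
-/

open scoped TensorProduct
open TensorProduct Finset

/-- The `ℓ_p` norm of a vector in `ℝⁿ`. -/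
noncomputable def pNorm (p : ℝ) {n : ℕ} (x : Fin n → ℝ) : ℝ :=
  (∑ i, |x i| ^ p) ^ (1 / p)

/-- The projective tensor norm on `ℓ_{p₁}^n ⊗̂ ℓ_{p₂}^n ⊗̂ ℓ_{p₃}^n`. -/
noncomputable def projNorm3 (p₁ p₂ p₃ : ℝ) {n : ℕ}
    (t : (Fin n → ℝ) ⊗[ℝ] ((Fin n → ℝ) ⊗[ℝ] (Fin n → ℝ))) : ℝ :=
  sInf {s : ℝ | ∃ (m : ℕ) (x y z : Fin m → (Fin n → ℝ)),
    t = ∑ j, x j ⊗ₜ[ℝ] (y j ⊗ₜ[ℝ] z j) ∧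
    s = ∑ j, pNorm p₁ (x j) * pNorm p₂ (y j) * pNorm p₃ (z j)}

section PNorm

variable {n : ℕ}

lemma pNorm_nonneg (p : ℝ) (x : Fin n → ℝ) : 0 ≤ pNorm p x :=
  Real.rpow_nonneg (sum_nonneg fun _ _ => Real.rpow_nonneg (abs_nonneg _) _) _

lemma pNorm_of_forall_abs_eq {p : ℝ} (hp : p ≠ 0) {x : Fin n → ℝ} {c : ℝ} (hc : 0 ≤ c)
    (hx : ∀ i, |x i| = c) : pNorm p x = c * (n : ℝ) ^ (1 / p) := by
  simp only [pNorm, hx, sum_const, card_univ, Fintype.card_fin, nsmul_eq_mul]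
  rw [Real.mul_rpow (by positivity) (by positivity), ← Real.rpow_mul hc, mul_one_div_cancel hp,
    Real.rpow_one, mul_comm]

lemma pNorm_mul_le {p q r : ℝ} (hpqr : p.HolderTriple q r) (x y : Fin n → ℝ) :
    pNorm r (x * y) ≤ pNorm p x * pNorm q y := by
  have hr := hpqr.pos'
  have key := Real.rpow_le_rpow (sum_nonneg fun _ _ => by positivity)
    (Real.Lr_rpow_le_Lp_mul_Lq univ x y hpqr) (one_div_nonneg.2 hr.le)
  rwa [Real.mul_rpow (by positivity) (by positivity), ← Real.rpow_mul (by positivity),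
    ← Real.rpow_mul (by positivity), div_mul_div_cancel₀' hr.ne', div_mul_div_cancel₀' hr.ne'] at key

lemma sum_abs_le_pNorm {p : ℝ} (hp : 1 ≤ p) (x : Fin n → ℝ) :
    ∑ i, |x i| ≤ (n : ℝ) ^ (1 - 1 / p) * pNorm p x := by
  simpa [pNorm] using Real.inner_le_weight_mul_Lp_of_nonneg univ hp (fun _ => 1) (fun i => |x i|)
    (fun _ => zero_le_one) (fun i => abs_nonneg (x i))

lemma sum_mul_mul_le_pNorm {p₁ p₂ p₃ r : ℝ} (hp₁ : 0 < p₁) (hp₂ : 0 < p₂) (hp₃ : 0 < p₃)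
    (hr : 1 / r = 1 / p₁ + 1 / p₂ + 1 / p₃) (hr₁ : 1 ≤ r) (x y z : Fin n → ℝ) :
    ∑ i, x i * y i * z i ≤ (n : ℝ) ^ (1 - 1 / r) * (pNorm p₁ x * pNorm p₂ y * pNorm p₃ z) := by
  have h₁₂ := Real.HolderTriple.of_pos hp₁ hp₂
  have h₁₂₃ : Real.HolderTriple (p₁⁻¹ + p₂⁻¹)⁻¹ p₃ r :=
    ⟨by simpa using hr.symm, h₁₂.pos', hp₃⟩
  calc ∑ i, x i * y i * z i ≤ ∑ i, |(x * y * z) i| :=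
        sum_le_sum fun i _ => le_abs_self _
    _ ≤ (n : ℝ) ^ (1 - 1 / r) * pNorm r (x * y * z) := sum_abs_le_pNorm hr₁ _
    _ ≤ (n : ℝ) ^ (1 - 1 / r) * (pNorm p₁ x * pNorm p₂ y * pNorm p₃ z) := by
        gcongr
        calc pNorm r (x * y * z) ≤ pNorm _ (x * y) * pNorm p₃ z := pNorm_mul_le h₁₂₃ _ _
          _ ≤ pNorm p₁ x * pNorm p₂ y * pNorm p₃ z := by
            gcongr
            · exact pNorm_nonneg _ _
            · exact pNorm_mul_le h₁₂ _ _

end PNorm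

section Coordinates

variable (R : Type*) [CommRing R] (ι : Type*) [Fintype ι]

noncomputable def cubeBasis : Module.Basis (ι × ι × ι) R ((ι → R) ⊗[R] ((ι → R) ⊗[R] (ι → R))) :=
  (Pi.basisFun R ι).tensorProduct ((Pi.basisFun R ι).tensorProduct (Pi.basisFun R ι))

def diagTensor [DecidableEq ι] : (ι → R) ⊗[R] ((ι → R) ⊗[R] (ι → R)) :=
  ∑ i, Pi.single i 1 ⊗ₜ (Pi.single i 1 ⊗ₜ Pi.single i 1)

variable {R ι}

lemma cubeBasis_repr_tmul (x y z : ι → R) (i j k : ι) :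
    (cubeBasis R ι).repr (x ⊗ₜ (y ⊗ₜ z)) (i, j, k) = x i * (y j * z k) := by
  simp [cubeBasis, Module.Basis.tensorProduct_repr_tmul_apply, mul_comm]

lemma cubeBasis_repr_diagTensor [DecidableEq ι] (i j k : ι) :
    (cubeBasis R ι).repr (diagTensor R ι) (i, j, k) = if i = j ∧ i = k then 1 else 0 := by
  simp only [diagTensor, map_sum, Finsupp.finsetSum_apply, cubeBasis_repr_tmul, Pi.single_apply]
  rcases eq_or_ne i j with rfl | hij <;> rcases eq_or_ne i k with rfl | hik <;>
    simp [*, eq_comm]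

end Coordinates

section Signs

variable {ι : Type*}

def signVector (ε : ι → ℤˣ) : ι → ℝ := fun i => ((ε i : ℤ) : ℝ)

lemma abs_signVector (ε : ι → ℤˣ) (i : ι) : |signVector ε i| = 1 := by
  rcases Int.units_eq_one_or (ε i) with h | h <;> simp [signVector, h]

variable [Fintype ι] [DecidableEq ι]

lemma sum_signVector_mul (i j : ι) :
    ∑ ε : ι → ℤˣ, signVector ε i * signVector ε j = if i = j then 2 ^ Fintype.card ι else 0 := by
  split_ifs with hij
  · subst hij
    simp [signVector, ← Int.cast_mul, ← Units.val_mul, Int.units_mul_self]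
  · let χ : (ι → ℤˣ) →* ℝ := ((Int.castRingHom ℝ).toMonoidHom.comp (Units.coeHom ℤ)).comp
      (Pi.evalMonoidHom (fun _ => ℤˣ) i * Pi.evalMonoidHom (fun _ => ℤˣ) j)
    have hχ : χ ≠ 1 := by
      intro h
      have := DFunLike.congr_fun h (Pi.mulSingle i (-1))
      simp [χ, Ne.symm hij] at this
      norm_num at this
    simpa [χ, signVector] using sum_hom_units_eq_zero χ hχ

lemma diagTensor_eq_sum_signVector :
    diagTensor ℝ ι = ∑ ε : (ι → ℤˣ) × (ι → ℤˣ),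
      ((4 ^ Fintype.card ι : ℝ)⁻¹ • (signVector ε.1 * signVector ε.2)) ⊗ₜ
        (signVector ε.1 ⊗ₜ signVector ε.2) := by
  refine (cubeBasis ℝ ι).repr.injective (Finsupp.ext fun ⟨i, j, k⟩ => ?_)
  simp only [cubeBasis_repr_diagTensor, map_sum, Finsupp.finsetSum_apply, cubeBasis_repr_tmul,
    Pi.smul_apply, Pi.mul_apply, smul_eq_mul, Fintype.sum_prod_type]
  calc (if i = j ∧ i = k then (1 : ℝ) else 0)
      = (4 ^ Fintype.card ι : ℝ)⁻¹ * ((∑ ε : ι → ℤˣ, signVector ε i * signVector ε j) *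
          ∑ δ : ι → ℤˣ, signVector δ i * signVector δ k) := by
        rw [sum_signVector_mul, sum_signVector_mul]
        rcases eq_or_ne i j with rfl | hj <;> rcases eq_or_ne i k with rfl | hk <;>
          simp [*, ← mul_pow, show (2 : ℝ) * 2 = 4 by norm_num]
    _ = _ := by
        rw [sum_mul_sum, mul_sum]
        refine sum_congr rfl fun ε _ => ?_
        rw [mul_sum]
        exact sum_congr rfl fun δ _ => by ring

end Signs

section DiagonalTensor

variable {p₁ p₂ p₃ r : ℝ}

lemma rpow_le_sum_pNorm_of_diagTensor_eq (hp₁ : 0 < p₁) (hp₂ : 0 < p₂) (hp₃ : 0 < p₃)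
    (hr : 1 / r = 1 / p₁ + 1 / p₂ + 1 / p₃) (hr₁ : 1 ≤ r) {n m : ℕ} (x y z : Fin m → Fin n → ℝ)
    (h : diagTensor ℝ (Fin n) = ∑ j, x j ⊗ₜ[ℝ] (y j ⊗ₜ[ℝ] z j)) :
    (n : ℝ) ^ (1 / r) ≤ ∑ j, pNorm p₁ (x j) * pNorm p₂ (y j) * pNorm p₃ (z j) := by
  set C := ∑ j, pNorm p₁ (x j) * pNorm p₂ (y j) * pNorm p₃ (z j)
  have hdiag (i : Fin n) : ∑ j, x j i * y j i * z j i = 1 := by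
    simpa [cubeBasis_repr_diagTensor, map_sum, Finsupp.finsetSum_apply, cubeBasis_repr_tmul,
      mul_assoc] using (congr_arg (fun t => (cubeBasis ℝ (Fin n)).repr t (i, i, i)) h).symm
  have hn : (n : ℝ) ≤ (n : ℝ) ^ (1 - 1 / r) * C := calc
    (n : ℝ) = ∑ j, ∑ i, x j i * y j i * z j i := by simp [sum_comm (γ := Fin m), hdiag]
    _ ≤ ∑ j, (n : ℝ) ^ (1 - 1 / r) * (pNorm p₁ (x j) * pNorm p₂ (y j) * pNorm p₃ (z j)) :=
      sum_le_sum fun j _ => sum_mul_mul_le_pNorm hp₁ hp₂ hp₃ hr hr₁ _ _ _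
    _ = (n : ℝ) ^ (1 - 1 / r) * C := by rw [mul_sum]
  rcases Nat.eq_zero_or_pos n with rfl | hpos
  · rw [Nat.cast_zero, Real.zero_rpow (one_div_pos.2 (zero_lt_one.trans_le hr₁)).ne']
    exact sum_nonneg fun j _ =>
      mul_nonneg (mul_nonneg (pNorm_nonneg _ _) (pNorm_nonneg _ _)) (pNorm_nonneg _ _)
  · have hn₀ : (0 : ℝ) < n := Nat.cast_pos.2 hpos
    refine le_of_mul_le_mul_left ?_ (Real.rpow_pos_of_pos hn₀ (1 - 1 / r))
    rwa [← Real.rpow_add hn₀, sub_add_cancel, Real.rpow_one]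

lemma exists_repr_diagTensor_sum_pNorm_eq (hp₁ : 0 < p₁) (hp₂ : 0 < p₂) (hp₃ : 0 < p₃)
    (hr : 1 / r = 1 / p₁ + 1 / p₂ + 1 / p₃) (n : ℕ) :
    ∃ (m : ℕ) (x y z : Fin m → Fin n → ℝ),
      diagTensor ℝ (Fin n) = ∑ j, x j ⊗ₜ[ℝ] (y j ⊗ₜ[ℝ] z j) ∧
      (n : ℝ) ^ (1 / r) = ∑ j, pNorm p₁ (x j) * pNorm p₂ (y j) * pNorm p₃ (z j) := by
  let e := Fintype.equivFin ((Fin n → ℤˣ) × (Fin n → ℤˣ))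
  have hcard : (Fintype.card ((Fin n → ℤˣ) × (Fin n → ℤˣ)) : ℝ) = 4 ^ n := by
    simp [← mul_pow]
  have hcost (ε δ : Fin n → ℤˣ) :
      pNorm p₁ ((4 ^ n : ℝ)⁻¹ • (signVector ε * signVector δ)) * pNorm p₂ (signVector ε) *
        pNorm p₃ (signVector δ) = (4 ^ n : ℝ)⁻¹ * (n : ℝ) ^ (1 / r) := by
    rw [pNorm_of_forall_abs_eq hp₁.ne' (c := (4 ^ n)⁻¹) (by positivity) fun i => by
        simp [abs_signVector],
      pNorm_of_forall_abs_eq hp₂.ne' zero_le_one (abs_signVector ε),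
      pNorm_of_forall_abs_eq hp₃.ne' zero_le_one (abs_signVector δ), hr,
      Real.rpow_add' (Nat.cast_nonneg n) (by positivity),
      Real.rpow_add' (Nat.cast_nonneg n) (by positivity)]
    ring
  refine ⟨_, fun j => (4 ^ n : ℝ)⁻¹ • (signVector (e.symm j).1 * signVector (e.symm j).2),
    fun j => signVector (e.symm j).1, fun j => signVector (e.symm j).2, ?_, ?_⟩
  · rw [diagTensor_eq_sum_signVector, Fintype.card_fin]
    exact (e.symm.sum_comp _).symm
  · simp only [hcost, sum_const, card_univ, Fintype.card_fin, nsmul_eq_mul, hcard]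
    field_simp

end DiagonalTensor

/-- if `1/p₁ + 1/p₂ + 1/p₃ ≤ 1` and `1/r = 1/p₁ + 1/p₂ + 1/p₃`, then the
projective norm of the diagonal tensor `Σᵢ eᵢ ⊗ eᵢ ⊗ eᵢ` in
`ℓ_{p₁}^n ⊗̂ ℓ_{p₂}^n ⊗̂ ℓ_{p₃}^n` equals `n^{1/r}`. -/
theorem projNorm3_diagonal_eq (p₁ p₂ p₃ r : ℝ)
    (hp₁ : 1 < p₁) (hp₂ : 1 < p₂) (hp₃ : 1 < p₃)
    (hsum : 1 / p₁ + 1 / p₂ + 1 / p₃ ≤ 1)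
    (hr : 1 / r = 1 / p₁ + 1 / p₂ + 1 / p₃) (n : ℕ) :
    projNorm3 p₁ p₂ p₃
        (∑ i : Fin n, (Pi.single i (1 : ℝ)) ⊗ₜ[ℝ]
          ((Pi.single i (1 : ℝ)) ⊗ₜ[ℝ] (Pi.single i (1 : ℝ))))
      = (n : ℝ) ^ (1 / r) := by
  have hp₁' : 0 < p₁ := zero_lt_one.trans hp₁
  have hp₂' : 0 < p₂ := zero_lt_one.trans hp₂
  have hp₃' : 0 < p₃ := zero_lt_one.trans hp₃
  have hr₁ : 1 ≤ r := by
    have hr₀ : 0 < r := one_div_pos.1 (by rw [hr]; positivity)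
    rwa [← hr, div_le_one hr₀] at hsum
  refine IsLeast.csInf_eq ⟨exists_repr_diagTensor_sum_pNorm_eq hp₁' hp₂' hp₃' hr n, ?_⟩
  rintro s ⟨m, x, y, z, h, rfl⟩
  exact rpow_le_sum_pNorm_of_diagTensor_eq hp₁' hp₂' hp₃' hr hr₁ x y z h
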